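/- arXiv:2408.02328 — 7 statements merged into one kernel-verified Lean document; each statement's English description precedes it below -/
import Mathlib

section
/- Let F be a field, let n ≥ 1 and d ≥ 0 be integers, and let f ∈ F[x_1,...,x_n] be a multilinear polynomial (every monomial is square-free) of degree at most d. Suppose A ⊆ F^n satisfies |A| > 2 · ∑_{0 ≤ i ≤ d/2} C(n, i). If f(a − b) = 0 for every pair a, b ∈ A with a ≠ b, then f(0) = 0. -/
/-!
For a multilinear `f`, `f(x - y) = ∑ₘ cₘ ∑_{T ⊆ Sₘ} x^T (-y)^{Sₘ \ T}` with `Sₘ` the support of the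
monomial `m`. Since `|Sₘ| ≤ d`, either `|T| ≤ d / 2` or `|Sₘ \ T| ≤ d / 2`. Splitting the matrix
`(f(xᵢ - yⱼ))ᵢⱼ` accordingly, the columns of the first part lie in the span of the
`N = ∑_{i ≤ d/2} C(n, i)` vectors `(xᵢ^T)ᵢ` with `|T| ≤ d / 2`, and the rows of the second part in
the span of `N` vectors as well, so the matrix has rank at most `2N`. For `x = y` running over `A`
the matrix is `f(0)` times the identity, of rank `|A| > 2N` unless `f(0) = 0`.
-/

open Finset MvPolynomial Submodule

namespace Matrix

variable {m n τ K : Type*} [Field K] [Fintype n]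

theorem rank_add_le (A B : Matrix m n K) : (A + B).rank ≤ A.rank + B.rank := by
  rw [rank, rank, rank, mulVecLin_add]
  exact (Submodule.finrank_mono (LinearMap.range_add_le _ _)).trans
    (Submodule.finrank_add_le_finrank_add_finrank _ _)

theorem rank_le_card_of_col_mem_span [Fintype τ] (A : Matrix m n K) (b : τ → m → K)
    (h : ∀ j, A.col j ∈ span K (Set.range b)) : A.rank ≤ Fintype.card τ := by
  have := FiniteDimensional.span_of_finite K (Set.finite_range b)
  rw [rank_eq_finrank_span_cols]
  exact (Submodule.finrank_mono (span_le.mpr (Set.range_subset_iff.mpr h))).trans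
    (finrank_range_le_card b)

theorem rank_le_card_of_row_mem_span [Fintype m] [Fintype τ] (A : Matrix m n K)
    (b : τ → n → K) (h : ∀ i, A.row i ∈ span K (Set.range b)) : A.rank ≤ Fintype.card τ :=
  rank_transpose A ▸ rank_le_card_of_col_mem_span Aᵀ b h

end Matrix

theorem Fintype.card_finset_card_le (σ : Type*) [Fintype σ] (k : ℕ) :
    Fintype.card {T : Finset σ // T.card ≤ k} = ∑ i ∈ range (k + 1), (Fintype.card σ).choose i := by
  classical
  rw [Fintype.card_subtype, card_eq_sum_card_fiberwise (f := Finset.card) (t := range (k + 1))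
    fun T hT => mem_range.2 (Nat.lt_succ_of_le (mem_filter.1 (mem_coe.1 hT)).2)]
  refine Finset.sum_congr rfl fun i hi => ?_
  rw [mem_range] at hi
  have : ({T ∈ {T : Finset σ | T.card ≤ k} | T.card = i} : Finset _) = powersetCard i univ := by
    ext T; simp only [mem_filter, mem_univ, true_and, mem_powersetCard, subset_univ]; omega
  rw [this, card_powersetCard, card_univ]

theorem MvPolynomial.card_support_le_totalDegree {σ R : Type*} [CommSemiring R]
    {p : MvPolynomial σ R} {m : σ →₀ ℕ} (hm : m ∈ p.support) : m.support.card ≤ p.totalDegree := by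
  classical
  calc m.support.card = (Finsupp.toMultiset m).toFinset.card := by rw [Finsupp.toFinset_toMultiset]
    _ ≤ Multiset.card (Finsupp.toMultiset m) := Multiset.toFinset_card_le _
    _ = m.sum fun _ e => e := Finsupp.card_toMultiset m
    _ ≤ p.totalDegree := le_totalDegree hm

theorem MvPolynomial.eval_eq_sum_prod_support {σ R : Type*} [CommSemiring R] {p : MvPolynomial σ R}
    (hp : ∀ m ∈ p.support, ∀ i, m i ≤ 1) (v : σ → R) :
    eval v p = ∑ m ∈ p.support, p.coeff m * ∏ i ∈ m.support, v i := by
  rw [eval_eq]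
  refine Finset.sum_congr rfl fun m hm => congrArg _ (prod_congr rfl fun i hi => ?_)
  rw [le_antisymm (hp m hm i) (Nat.one_le_iff_ne_zero.mpr (Finsupp.mem_support_iff.mp hi)), pow_one]

section Expansion

variable {σ F ι κ : Type*} [Field F] [DecidableEq σ] (f : MvPolynomial σ F)
  (x : ι → σ → F) (y : κ → σ → F)

/-- The terms `cₘ x^T (-y)^{Sₘ \ T}` of the expansion of `f(xᵢ - yⱼ)` whose `T` satisfies `p`. -/
noncomputable def expansionPart (p : Finset σ → Prop) [DecidablePred p] : Matrix ι κ F :=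
  Matrix.of fun i j => ∑ m ∈ f.support, f.coeff m *
    ∑ T ∈ m.support.powerset with p T, (∏ l ∈ T, x i l) * ∏ l ∈ m.support \ T, -y j l

variable {f} in
theorem evalSub_eq_expansionPart_add (hf : ∀ m ∈ f.support, ∀ i, m i ≤ 1)
    (p : Finset σ → Prop) [DecidablePred p] :
    Matrix.of (fun i j => eval (x i - y j) f) =
      expansionPart f x y p + expansionPart f x y (fun T => ¬ p T) := by
  ext i j
  simp only [Matrix.of_apply, Matrix.add_apply, expansionPart, eval_eq_sum_prod_support hf,
    ← sum_add_distrib, ← mul_add, sum_filter_add_sum_filter_not, sub_eq_add_neg, Pi.add_apply,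
    Pi.neg_apply, prod_add]

theorem col_expansionPart_mem_span (k : ℕ) (j : κ) :
    (expansionPart f x y (·.card ≤ k)).col j ∈
      span F (Set.range fun T : {T : Finset σ // T.card ≤ k} => fun i => ∏ l ∈ T.1, x i l) := by
  have : (expansionPart f x y (·.card ≤ k)).col j = ∑ m ∈ f.support, f.coeff m •
      ∑ T ∈ m.support.powerset with T.card ≤ k,
        (∏ l ∈ m.support \ T, -y j l) • fun i => ∏ l ∈ T, x i l := by
    ext i
    simp [expansionPart, Matrix.col, Finset.sum_apply, mul_comm]
  rw [this]
  exact sum_mem fun m _ => smul_mem _ _ <| sum_mem fun T hT =>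
    smul_mem _ _ <| subset_span ⟨⟨T, (mem_filter.1 hT).2⟩, rfl⟩

variable {f} in
theorem row_expansionPart_mem_span {k : ℕ} (hdeg : f.totalDegree ≤ 2 * k + 1) (i : ι) :
    (expansionPart f x y (¬ ·.card ≤ k)).row i ∈
      span F (Set.range fun T : {T : Finset σ // T.card ≤ k} => fun j => ∏ l ∈ T.1, -y j l) := by
  have : (expansionPart f x y (¬ ·.card ≤ k)).row i = ∑ m ∈ f.support, f.coeff m •
      ∑ T ∈ m.support.powerset with ¬ T.card ≤ k,
        (∏ l ∈ T, x i l) • fun j => ∏ l ∈ m.support \ T, -y j l := by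
    ext j
    simp [expansionPart, Matrix.row, Finset.sum_apply]
  rw [this]
  refine sum_mem fun m hm => smul_mem _ _ <| sum_mem fun T hT => smul_mem _ _ <| subset_span ?_
  obtain ⟨hTS, hTk⟩ := mem_filter.1 hT
  have hS := (card_support_le_totalDegree hm).trans hdeg
  have hcard : (m.support \ T).card ≤ k := by
    rw [card_sdiff_of_subset (mem_powerset.1 hTS)]; omega
  exact ⟨⟨m.support \ T, hcard⟩, rfl⟩

variable {f} in
theorem rank_evalSub_le [Fintype σ] [Fintype ι] [Fintype κ] (hf : ∀ m ∈ f.support, ∀ i, m i ≤ 1) {d : ℕ} (hdeg : f.totalDegree ≤ d) :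
    (Matrix.of fun i j => eval (x i - y j) f).rank ≤
      2 * ∑ i ∈ range (d / 2 + 1), (Fintype.card σ).choose i := by
  rw [evalSub_eq_expansionPart_add x y hf (·.card ≤ d / 2)]
  calc _ ≤ (expansionPart f x y (·.card ≤ d / 2)).rank +
        (expansionPart f x y (¬ ·.card ≤ d / 2)).rank := Matrix.rank_add_le _ _
    _ ≤ Fintype.card {T : Finset σ // T.card ≤ d / 2} +
        Fintype.card {T : Finset σ // T.card ≤ d / 2} :=
      add_le_add (Matrix.rank_le_card_of_col_mem_span _ _ (col_expansionPart_mem_span f x y _))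
        (Matrix.rank_le_card_of_row_mem_span _ _ (row_expansionPart_mem_span x y (by omega)))
    _ = _ := by rw [Fintype.card_finset_card_le]; ring

end Expansion

theorem croot_lev_pach_lemma_general
    {F : Type*} [Field F] {n : ℕ} (d : ℕ)
    (f : MvPolynomial (Fin n) F)
    (hml : ∀ m ∈ f.support, ∀ i : Fin n, m i ≤ 1)
    (hdeg : f.totalDegree ≤ d)
    (A : Finset (Fin n → F))
    (hA : 2 * ∑ i ∈ Finset.range (d / 2 + 1), n.choose i < A.card)
    (hvan : ∀ a ∈ A, ∀ b ∈ A, a ≠ b → MvPolynomial.eval (a - b) f = 0) :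
    MvPolynomial.eval (0 : Fin n → F) f = 0 := by
  classical
  by_contra hf0
  have hdiag : (Matrix.of fun a b : A => eval ((a : Fin n → F) - (b : Fin n → F)) f) =
      Matrix.diagonal fun _ => eval 0 f := by
    ext a b
    by_cases hab : a = b
    · simp [hab]
    · simp [Matrix.diagonal_apply_ne _ hab, hvan a a.2 b b.2 (Subtype.coe_ne_coe.mpr hab)]
  have hrank := rank_evalSub_le (fun a : A => a.1) (fun a : A => a.1) hml hdeg
  rw [hdiag, Matrix.rank_diagonal] at hrank
  simp only [ne_eq, hf0, not_false_eq_true, Fintype.card_subtype_true, Fintype.card_coe,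
    Fintype.card_fin] at hrank
  omega

/-- Croot–Lev–Pach Lemma 1: if a multilinear polynomial `f` of degree at most `d`
vanishes at all differences `a - b` of distinct elements of a large set `A`,
then `f(0) = 0`. -/
theorem croot_lev_pach_lemma
    {F : Type*} [Field F] {n : ℕ} (hn : 1 ≤ n) (d : ℕ)
    (f : MvPolynomial (Fin n) F)
    (hml : ∀ m ∈ f.support, ∀ i : Fin n, m i ≤ 1)
    (hdeg : f.totalDegree ≤ d)
    (A : Finset (Fin n → F))
    (hA : 2 * ∑ i ∈ Finset.range (d / 2 + 1), n.choose i < A.card)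
    (hvan : ∀ a ∈ A, ∀ b ∈ A, a ≠ b → MvPolynomial.eval (a - b) f = 0) :
    MvPolynomial.eval (0 : Fin n → F) f = 0 :=
  croot_lev_pach_lemma_general d f hml hdeg A hA hvan
end

section
/- Let F be a field, A a finite set, and let δ : A × A × A → F be the diagonal map, i.e. δ(x, y, z) = 1 if x = y = z and δ(x, y, z) = 0 otherwise. If δ can be written as a sum of d functions, each of one of the forms (x, y, z) ↦ g(x)·h(y, z), (x, y, z) ↦ g(y)·h(x, z), or (x, y, z) ↦ g(z)·h(x, y), then d ≥ |A|. In particular the slice rank of the diagonal map equals |A|. -/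
/-!
Contract a decomposition of the diagonal against a weight vector `v : A → F` in the first
coordinate. The diagonal becomes `diagonal v`, of rank `#(support v)`; a slice `g(y)·h(x,z)` or
`g(z)·h(x,y)` becomes a rank-one matrix; a slice `g(x)·h(y,z)` becomes `(g ⬝ᵥ v) • h`. Choosing
`v` orthogonal to the `g` of the `k` slices of the last kind costs at most `k` dimensions, and a
subspace of dimension `r` of `A → F` contains a vector with at least `r` nonzero coordinates, so
`|A| - k ≤ #(support v) ≤ d - k`.
-/

open Module

theorem Submodule.exists_mem_finrank_le_card_support {F A : Type*} [Field F] [DecidableEq F]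
    [Fintype A] (K : Submodule F (A → F)) :
    ∃ v ∈ K, finrank F K ≤ Fintype.card {a // v a ≠ 0} := by
  classical
  -- The coordinate functionals span `Dual F K`; a basis of it extracted from them takes the
  -- value `1` simultaneously at some vector of `K`.
  let ev : A → Dual F K := fun a => (LinearMap.proj a).comp K.subtype
  have hspan : span F (Set.range ev) = ⊤ := by
    rw [← Subspace.dualCoannihilator_dualAnnihilator_eq (W := span F (Set.range ev))]
    suffices (span F (Set.range ev)).dualCoannihilator = ⊥ by
      rw [this, Submodule.dualAnnihilator_bot]
    refine eq_bot_iff.2 fun k hk => ?_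
    ext a
    exact (mem_dualCoannihilator k).1 hk (ev a) (subset_span ⟨a, rfl⟩)
  obtain ⟨s, -, -, hs, hli⟩ :=
    exists_linearIndepOn_extension (linearIndepOn_empty F ev) (Set.empty_subset Set.univ)
  let b : Basis s F (Dual F K) := Basis.mk hli.linearIndependent <| by
    rw [← Set.image_eq_range, ← hspan, ← Set.image_univ]
    exact span_le.2 hs
  obtain ⟨f, hf⟩ := Module.exists_dual_forall_apply_eq_one hli
  set v := (evalEquiv F K).symm f
  have hv : ∀ a ∈ s, (v : A → F) a = 1 := fun a ha => by
    rw [← hf a ha, ← (evalEquiv F K).apply_symm_apply f]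
    rfl
  refine ⟨v, v.2, ?_⟩
  calc finrank F K = finrank F (Dual F K) := Subspace.dual_finrank_eq.symm
    _ = Fintype.card s := finrank_eq_card_basis b
    _ ≤ Fintype.card {a // (v : A → F) a ≠ 0} :=
      Fintype.card_le_of_injective (fun a => ⟨a, by simp [hv a a.2]⟩)
        fun a a' h => Subtype.ext (congrArg Subtype.val h :)

namespace Matrix

variable {F m n ι : Type*} [Field F] [Fintype n]

theorem exists_mulVec_eq_zero_card_le_add_card_support [DecidableEq F] [Fintype m]
    (G : Matrix m n F) :
    ∃ v, G *ᵥ v = 0 ∧ Fintype.card n ≤ Fintype.card m + Fintype.card {a // v a ≠ 0} := by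
  obtain ⟨v, hv, hcard⟩ := (LinearMap.ker G.mulVecLin).exists_mem_finrank_le_card_support
  refine ⟨v, hv, ?_⟩
  have rank_nullity := G.mulVecLin.finrank_range_add_finrank_ker
  rw [finrank_fintype_fun_eq_card] at rank_nullity
  have hrank : finrank F (LinearMap.range G.mulVecLin) ≤ Fintype.card m := G.rank_le_card_height
  omega

theorem rank_add_le_s1 (M N : Matrix m n F) : (M + N).rank ≤ M.rank + N.rank := by
  rw [rank, rank, rank, mulVecLin_add]
  exact (Submodule.finrank_mono (LinearMap.range_add_le _ _)).trans
    (Submodule.finrank_add_le_finrank_add_finrank _ _)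

theorem rank_sum_le (s : Finset ι) (M : ι → Matrix m n F) :
    (∑ i ∈ s, M i).rank ≤ ∑ i ∈ s, (M i).rank :=
  Finset.le_sum_of_subadditive (fun N : Matrix m n F => N.rank) rank_zero.le rank_add_le_s1 s M

end Matrix

open Matrix

section Contraction

variable {F A : Type*} [Field F] [Fintype A]

def contractFst (v : A → F) : (A × A × A → F) →ₗ[F] Matrix A A F where
  toFun T := of fun y z => ∑ x, v x * T (x, y, z)
  map_add' T T' := by ext; simp [mul_add, Finset.sum_add_distrib]
  map_smul' c T := by ext; simp [Finset.mul_sum, mul_left_comm]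

@[simp]
theorem contractFst_apply (v : A → F) (T : A × A × A → F) (y z : A) :
    contractFst v T y z = ∑ x, v x * T (x, y, z) := rfl

theorem contractFst_diagonal [DecidableEq A] (v : A → F) :
    contractFst v (fun p => if p.1 = p.2.1 ∧ p.2.1 = p.2.2 then 1 else 0) = diagonal v := by
  ext y z
  by_cases hyz : y = z <;> simp [hyz]

theorem contractFst_slice_fst (v g : A → F) (h : A × A → F) :
    contractFst v (fun p => g p.1 * h (p.2.1, p.2.2)) = (g ⬝ᵥ v) • of fun y z => h (y, z) := by
  ext y z
  simp only [contractFst_apply, Matrix.smul_apply, of_apply, smul_eq_mul, dotProduct,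
    Finset.sum_mul]
  exact Finset.sum_congr rfl fun x _ => by ring

theorem contractFst_slice_snd (v g : A → F) (h : A × A → F) :
    contractFst v (fun p => g p.2.1 * h (p.1, p.2.2)) =
      vecMulVec g fun z => ∑ x, v x * h (x, z) := by
  ext y z
  simp only [contractFst_apply, vecMulVec_apply, Finset.mul_sum]
  exact Finset.sum_congr rfl fun x _ => by ring

theorem contractFst_slice_third (v g : A → F) (h : A × A → F) :
    contractFst v (fun p => g p.2.2 * h (p.1, p.2.1)) =
      vecMulVec (fun y => ∑ x, v x * h (x, y)) g := by
  ext y z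
  simp only [contractFst_apply, vecMulVec_apply, Finset.sum_mul]
  exact Finset.sum_congr rfl fun x _ => by ring

end Contraction

/-- Tao–Sawin: the slice rank of the diagonal map on `A × A × A` is `|A|`:
any decomposition of the diagonal as a sum of `d` slice functions needs `d ≥ |A|`. -/
theorem slice_rank_diagonal
    {F : Type*} [Field F] {A : Type*} [Fintype A] [DecidableEq A]
    (d : ℕ) (T : Fin d → (A × A × A → F))
    (hslice : ∀ i : Fin d,
      (∃ g : A → F, ∃ h : A × A → F, T i = fun p => g p.1 * h (p.2.1, p.2.2)) ∨
      (∃ g : A → F, ∃ h : A × A → F, T i = fun p => g p.2.1 * h (p.1, p.2.2)) ∨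
      (∃ g : A → F, ∃ h : A × A → F, T i = fun p => g p.2.2 * h (p.1, p.2.1)))
    (hsum : ∀ p : A × A × A,
      (∑ i : Fin d, T i p) = if p.1 = p.2.1 ∧ p.2.1 = p.2.2 then 1 else 0) :
    Fintype.card A ≤ d := by
  classical
  set I : Finset (Fin d) :=
    {i | ∃ (g : A → F) (h : A × A → F), T i = fun p => g p.1 * h (p.2.1, p.2.2)}
  have hIslice : ∀ i : I, ∃ (g : A → F) (h : A × A → F), T i = fun p => g p.1 * h (p.2.1, p.2.2) :=
    fun i => (Finset.mem_filter.1 i.2).2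
  choose g h hgh using hIslice
  obtain ⟨v, hv, hcard⟩ := exists_mulVec_eq_zero_card_le_add_card_support (of g)
  have hvanish : ∀ i ∈ I, contractFst v (T i) = 0 := fun i hi => by
    have hgv : g ⟨i, hi⟩ ⬝ᵥ v = 0 := congrFun hv ⟨i, hi⟩
    rw [hgh ⟨i, hi⟩, contractFst_slice_fst, hgv, zero_smul]
  have hrank : ∀ i ∈ Iᶜ, (contractFst v (T i)).rank ≤ 1 := fun i hi => by
    rcases hslice i with hx | ⟨g, h, hT⟩ | ⟨g, h, hT⟩
    · exact absurd (Finset.mem_filter.2 ⟨Finset.mem_univ i, hx⟩ : i ∈ I) (Finset.mem_compl.1 hi)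
    · rw [hT, contractFst_slice_snd]
      exact rank_vecMulVec_le _ _
    · rw [hT, contractFst_slice_third]
      exact rank_vecMulVec_le _ _
  have hdiag : diagonal v = ∑ i ∈ Iᶜ, contractFst v (T i) := by
    rw [← contractFst_diagonal, ← funext hsum, ← Finset.sum_fn, map_sum,
      ← Finset.sum_compl_add_sum I, Finset.sum_eq_zero hvanish, add_zero]
  calc Fintype.card A ≤ I.card + Fintype.card {a // v a ≠ 0} := by simpa using hcard
    _ = I.card + (∑ i ∈ Iᶜ, contractFst v (T i)).rank := by rw [← rank_diagonal, hdiag]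
    _ ≤ I.card + Iᶜ.card := by
      gcongr
      simpa using (rank_sum_le _ _).trans (Finset.sum_le_card_nsmul _ _ 1 hrank)
    _ = d := by rw [Finset.card_add_card_compl, Fintype.card_fin]
end

section
/- Let F be a field and f(x_1,...,x_n) ∈ F[x_1,...,x_n]. Suppose deg(f) = t_1 + t_2 + ... + t_n, where each t_i is a non-negative integer, and suppose the coefficient of the monomial x_1^{t_1} · x_2^{t_2} ⋯ x_n^{t_n} in f is nonzero. Then for any subsets S_1,...,S_n of F with |S_i| ≥ t_i + 1 for each i, there exist s_1 ∈ S_1, s_2 ∈ S_2, ..., s_n ∈ S_n such that f(s_1,...,s_n) ≠ 0. -/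
/-- Alon's Combinatorial Nullstellensatz. -/
theorem combinatorial_nullstellensatz
    {F : Type*} [Field F] {n : ℕ}
    (f : MvPolynomial (Fin n) F) (t : Fin n →₀ ℕ)
    (hdeg : f.totalDegree = ∑ i : Fin n, t i)
    (hcoeff : MvPolynomial.coeff t f ≠ 0)
    (S : Fin n → Finset F) (hS : ∀ i : Fin n, t i + 1 ≤ (S i).card) :
    ∃ s : Fin n → F, (∀ i : Fin n, s i ∈ S i) ∧ MvPolynomial.eval s f ≠ 0 :=
  MvPolynomial.combinatorial_nullstellensatz_exists_eval_nonzero f t hcoeff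
    (by rw [hdeg, Finsupp.degree_eq_sum]) S hS
end

section
/- For every prime p ≥ 3 there exist a constant c_p with 0 < c_p < 1 and a constant C_p > 0 such that for all n ≥ 1, any subset S ⊆ 𝔽_p^n containing no three-term arithmetic progression satisfies |S| ≤ C_p · p^{c_p · n}. -/
/-!
Croot–Lev–Pach polynomial method in the form of Ellenberg–Gijswijt. Let `q = |F|`, let `V_d` be the
space of functions on `Fⁿ` spanned by monomials with exponents `< q` and total degree `≤ d`, and
pick `P ∈ V_d` vanishing outside `2S` with support as large as possible, of size at least
`dim V_d - (qⁿ - |S|)`. For `s ≠ t` in a progression-free `S`, `s + t ∉ 2S`, so the matrix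
`(P (s + t))_{s,t ∈ S}` is diagonal and its rank is at least the support of `P`. Expanding each
monomial of degree `≤ 2m + 1` at `s + t`, every term has degree `≤ m` in `s` or in `t`, so that rank
is at most `2 dim V_m`. With `d = 2m + 1`, `m = ⌊(q - 1)n/3⌋` and the symmetry `a ↦ (q - 1) - a` of
exponents this gives `|S| ≤ 3 dim V_m`, and `dim V_m ≤ (∑_{j<q} xʲ)ⁿ / x^m` for `0 < x ≤ 1`.
Near `x = 1` the right-hand side is `Bⁿ` with `B < q`.
-/

open Finset Module MvPolynomial

universe u

section Support

variable {F X : Type*} [Field F] [Fintype X]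

theorem Submodule.exists_ne_zero_mem_forall_eq_zero (V : Submodule F (X → F)) {T : Finset X}
    (hT : #T < finrank F V) : ∃ Q ∈ V, Q ≠ 0 ∧ ∀ x ∈ T, Q x = 0 := by
  have hker : LinearMap.ker ((LinearMap.funLeft F F ((↑) : T → X)).domRestrict V) ≠ ⊥ :=
    LinearMap.ker_ne_bot_of_finrank_lt (by rwa [finrank_fintype_fun_eq_card, Fintype.card_coe])
  obtain ⟨Q, hQ, hQ0⟩ := Submodule.exists_mem_ne_zero_of_ne_bot hker
  exact ⟨Q, Q.2, fun h => hQ0 (Subtype.ext h), fun x hx => congr_fun hQ ⟨x, hx⟩⟩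

variable [Fintype F] [DecidableEq F] [DecidableEq X]

theorem Submodule.exists_mem_support_subset_finrank_le (V : Submodule F (X → F)) (A : Finset X) :
    ∃ P ∈ V, (∀ x ∉ A, P x = 0) ∧ finrank F V ≤ #Aᶜ + #{x | P x ≠ 0} := by
  classical
  have hne : ({P | P ∈ V ∧ ∀ x ∉ A, P x = 0} : Finset (X → F)).Nonempty :=
    ⟨0, by simp [V.zero_mem]⟩
  obtain ⟨P, hP, hPmax⟩ := exists_max_image _ (fun P : X → F => #{x | P x ≠ 0}) hne
  simp only [mem_filter, mem_univ, true_and] at hP hPmax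
  refine ⟨P, hP.1, hP.2, not_lt.1 fun hlt => ?_⟩
  -- otherwise some `Q ≠ 0` vanishing on `Aᶜ` and on the support of `P` enlarges that support
  obtain ⟨Q, hQV, hQ0, hQT⟩ := V.exists_ne_zero_mem_forall_eq_zero
    (T := Aᶜ ∪ ({x | P x ≠ 0} : Finset X)) ((card_union_le _ _).trans_lt hlt)
  obtain ⟨x₀, hx₀⟩ := Function.ne_iff.1 hQ0
  have hPx₀ : P x₀ = 0 := by
    by_contra h
    exact hx₀ (hQT x₀ (by simp [h]))
  have hsupp : insert x₀ ({x | P x ≠ 0} : Finset X) ⊆ ({x | (P + Q) x ≠ 0} : Finset X) := by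
    intro x hx
    rcases Finset.mem_insert.1 hx with rfl | hx
    · simpa [hPx₀] using hx₀
    · have hQx : Q x = 0 := hQT x (mem_union_right _ hx)
      simpa [hQx] using hx
  have hmax := hPmax (P + Q) ⟨V.add_mem hP.1 hQV, fun x hx => by
    simp [hP.2 x hx, hQT x (by simp [hx])]⟩
  have hcard := card_le_card hsupp
  rw [card_insert_of_notMem (by simp [hPx₀])] at hcard
  omega

end Support

section Rank

open Matrix

variable {m n F : Type*} [Field F]

def Matrix.rowsIn (U : Submodule F (n → F)) : Submodule F (Matrix m n F) where
  carrier := {A | ∀ i, A i ∈ U}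
  add_mem' hA hB i := U.add_mem (hA i) (hB i)
  zero_mem' _ := U.zero_mem
  smul_mem' c _ hA i := U.smul_mem c (hA i)

def Matrix.rowsAddColsIn (U : Submodule F (n → F)) (U' : Submodule F (m → F)) :
    Submodule F (Matrix m n F) :=
  rowsIn U ⊔ (rowsIn U').comap (transposeLinearEquiv m n F F).toLinearMap

theorem Matrix.of_mul_mem_rowsAddColsIn_of_mem_right {U : Submodule F (n → F)}
    (U' : Submodule F (m → F)) (u : m → F) {v : n → F} (hv : v ∈ U) :
    of (fun i j => u i * v j) ∈ rowsAddColsIn U U' :=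
  Submodule.mem_sup_left fun i => U.smul_mem (u i) hv

theorem Matrix.of_mul_mem_rowsAddColsIn_of_mem_left (U : Submodule F (n → F))
    {U' : Submodule F (m → F)} {u : m → F} (hu : u ∈ U') (v : n → F) :
    of (fun i j => u i * v j) ∈ rowsAddColsIn U U' :=
  Submodule.mem_sup_right fun j => by
    convert U'.smul_mem (v j) hu using 1
    ext i
    simp [mul_comm]

variable [Fintype n]

theorem Matrix.rank_add_le_s4 (A B : Matrix m n F) : (A + B).rank ≤ A.rank + B.rank := by
  rw [rank, rank, rank, mulVecLin_add]
  exact (Submodule.finrank_mono (LinearMap.range_add_le _ _)).trans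
    (Submodule.finrank_add_le_finrank_add_finrank _ _)

variable [Fintype m]

theorem Matrix.rank_le_finrank_of_mem_rowsIn {A : Matrix m n F} {U : Submodule F (n → F)}
    (hA : A ∈ rowsIn U) : A.rank ≤ finrank F U := by
  rw [rank_eq_finrank_span_row]
  exact Submodule.finrank_mono (Submodule.span_le.2 (Set.range_subset_iff.2 hA))

theorem Matrix.rank_le_of_mem_rowsAddColsIn {U : Submodule F (n → F)} {U' : Submodule F (m → F)}
    {M : Matrix m n F} (hM : M ∈ rowsAddColsIn U U') : M.rank ≤ finrank F U + finrank F U' := by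
  obtain ⟨A, hA, B, hB, rfl⟩ := Submodule.mem_sup.1 hM
  have hBrank : B.rank ≤ finrank F U' := by
    rw [← rank_transpose]
    exact rank_le_finrank_of_mem_rowsIn hB
  exact (rank_add_le_s4 A B).trans (add_le_add (rank_le_finrank_of_mem_rowsIn hA) hBrank)

end Rank

def monomialFun {ι F : Type*} [Fintype ι] [CommMonoid F] (a : ι → ℕ) (x : ι → F) : F :=
  ∏ i, x i ^ a i

def reducedExponents (ι : Type*) [Fintype ι] [DecidableEq ι] (q t : ℕ) : Finset (ι → ℕ) :=
  {a ∈ Fintype.piFinset fun _ => range q | ∑ i, a i ≤ t}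

@[simp]
theorem mem_reducedExponents {ι : Type*} [Fintype ι] [DecidableEq ι] {q t : ℕ} {a : ι → ℕ} :
    a ∈ reducedExponents ι q t ↔ (∀ i, a i < q) ∧ ∑ i, a i ≤ t := by
  simp [reducedExponents]

def reducedPolyFuns (ι F : Type*) [Fintype ι] [DecidableEq ι] [CommRing F] (q d : ℕ) :
    Submodule F ((ι → F) → F) :=
  Submodule.span F (Set.range fun a : reducedExponents ι q d => monomialFun (a : ι → ℕ))

instance {ι F : Type*} [Fintype ι] [DecidableEq ι] [CommRing F] (q d : ℕ) :
    Module.Finite F (reducedPolyFuns ι F q d) :=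
  Module.Finite.span_of_finite F (Set.finite_range _)

section Dimension

theorem evalₗ_monomial_eq_monomialFun {ι F : Type*} [Fintype ι] [CommRing F] (a : ι → ℕ) :
    evalₗ F ι (monomial (Finsupp.equivFunOnFinite.symm a) 1) = monomialFun a := by
  ext x
  simp [monomialFun, evalₗ_apply, eval_monomial, Finsupp.prod_fintype]

variable {ι F : Type u} [Fintype ι] [Field F] [Fintype F]

theorem linearIndependent_monomialFun {s : Finset (ι → ℕ)}
    (hs : ∀ a ∈ s, ∀ i, a i < Fintype.card F) :
    LinearIndependent F fun a : s => (monomialFun (a : ι → ℕ) : (ι → F) → F) := by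
  let v : s → MvPolynomial ι F := fun a => monomial (Finsupp.equivFunOnFinite.symm a) 1
  have hv : LinearIndependent F v := (basisMonomials ι F).linearIndependent.comp _
    (Finsupp.equivFunOnFinite.symm.injective.comp Subtype.val_injective)
  have hreduced : Submodule.span F (Set.range v) ≤ restrictDegree ι F (Fintype.card F - 1) := by
    refine Submodule.span_le.2 (Set.range_subset_iff.2 fun a => ?_)
    rw [SetLike.mem_coe, mem_restrictDegree]
    intro m hm i
    obtain rfl := Finset.mem_singleton.1 (support_monomial_subset hm)
    have := hs a a.2 i
    simp only [Finsupp.coe_equivFunOnFinite_symm]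
    omega
  have hdisj : Disjoint (Submodule.span F (Set.range v)) (LinearMap.ker (evalₗ F ι)) :=
    Submodule.disjoint_def.2 fun P hP hP0 =>
      eq_zero_of_eval_eq_zero ι F P (congr_fun hP0) (hreduced hP)
  have hmap : (fun a : s => (monomialFun (a : ι → ℕ) : (ι → F) → F)) = evalₗ F ι ∘ v :=
    funext fun a => (evalₗ_monomial_eq_monomialFun (a : ι → ℕ)).symm
  exact hmap ▸ hv.map hdisj

theorem finrank_reducedPolyFuns [DecidableEq ι] (d : ℕ) :
    finrank F (reducedPolyFuns ι F (Fintype.card F) d) =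
      #(reducedExponents ι (Fintype.card F) d) := by
  rw [reducedPolyFuns, finrank_span_eq_card, Fintype.card_coe]
  exact linearIndependent_monomialFun fun a ha => (mem_reducedExponents.1 ha).1

end Dimension

section Counting

variable {ι : Type*} [Fintype ι] [DecidableEq ι]

theorem card_pow_le_card_reducedExponents_add {q d k : ℕ}
    (h : (q - 1) * Fintype.card ι ≤ d + k + 1) :
    q ^ Fintype.card ι ≤ #(reducedExponents ι q d) + #(reducedExponents ι q k) := by
  have hbox : #(Fintype.piFinset fun _ : ι => range q) = q ^ Fintype.card ι := by simp
  have hsum : ∑ _i : ι, (q - 1) = (q - 1) * Fintype.card ι := by simp [mul_comm]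
  have hreflect : #{a ∈ Fintype.piFinset fun _ : ι => range q | ¬∑ i, a i ≤ d}
      ≤ #(reducedExponents ι q k) := by
    refine card_le_card_of_injOn (fun a i => q - 1 - a i) (fun a ha => ?_)
      fun a ha b hb hab => ?_
    · simp only [mem_coe, mem_filter, Fintype.mem_piFinset, mem_range] at ha
      have hle : ∀ i, a i ≤ q - 1 := fun i => Nat.le_sub_one_of_lt (ha.1 i)
      simp only [mem_coe, mem_reducedExponents]
      refine ⟨fun i => by have := ha.1 i; omega, ?_⟩
      rw [sum_tsub_distrib _ fun i _ => hle i, hsum]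
      omega
    · simp only [mem_coe, mem_filter, Fintype.mem_piFinset, mem_range] at ha hb
      funext i
      have hi := congr_fun hab i
      have := ha.1 i
      have := hb.1 i
      simp only at hi
      omega
  have := card_filter_add_card_filter_not (s := Fintype.piFinset fun _ : ι => range q)
    (p := fun a => ∑ i, a i ≤ d)
  rw [reducedExponents]
  omega

theorem card_reducedExponents_mul_pow_le (q t : ℕ) {x : ℝ} (hx0 : 0 ≤ x) (hx1 : x ≤ 1) :
    #(reducedExponents ι q t) * x ^ t ≤ (∑ j ∈ range q, x ^ j) ^ Fintype.card ι := by
  calc #(reducedExponents ι q t) * x ^ t = ∑ _a ∈ reducedExponents ι q t, x ^ t := by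
        rw [sum_const, nsmul_eq_mul]
    _ ≤ ∑ a ∈ reducedExponents ι q t, x ^ ∑ i, a i :=
        sum_le_sum fun a ha => pow_le_pow_of_le_one hx0 hx1 (mem_reducedExponents.1 ha).2
    _ ≤ ∑ a ∈ Fintype.piFinset fun _ : ι => range q, x ^ ∑ i, a i :=
        sum_le_sum_of_subset_of_nonneg (filter_subset _ _) fun _ _ _ => by positivity
    _ = (∑ j ∈ range q, x ^ j) ^ Fintype.card ι := by
        simp_rw [← prod_pow_eq_pow_sum]
        rw [← prod_univ_sum, prod_const, card_univ]

end Counting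

section CrootLevPach

variable {ι F : Type*} [Fintype ι] [DecidableEq ι] [Field F]

theorem monomialFun_add (a : ι → ℕ) (x y : ι → F) :
    monomialFun a (x + y) = ∑ b ∈ Fintype.piFinset fun i => range (a i + 1),
      (∏ i, ((a i).choose (b i) : F)) * monomialFun b x * monomialFun (a - b) y := by
  simp only [monomialFun, Pi.add_apply, add_pow, prod_univ_sum, ← prod_mul_distrib, Pi.sub_apply]
  exact sum_congr rfl fun b _ => prod_congr rfl fun i _ => by ring

theorem of_monomialFun_add_mem_rowsAddColsIn (S : Finset (ι → F)) {q m : ℕ} {a : ι → ℕ}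
    (ha : ∀ i, a i < q) (hdeg : ∑ i, a i ≤ 2 * m + 1) :
    Matrix.of (fun s t : S => monomialFun a ((s : ι → F) + (t : ι → F))) ∈
      Matrix.rowsAddColsIn ((reducedPolyFuns ι F q m).map (LinearMap.funLeft F F (↑)))
        ((reducedPolyFuns ι F q m).map (LinearMap.funLeft F F (↑))) := by
  set U := (reducedPolyFuns ι F q m).map (LinearMap.funLeft F F ((↑) : S → ι → F))
  have hmono : ∀ b : ι → ℕ, (∀ i, b i ≤ a i) → ∑ i, b i ≤ m →
      (fun s : S => monomialFun b (s : ι → F)) ∈ U := fun b hba hbm =>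
    have hb : b ∈ reducedExponents ι q m :=
      mem_reducedExponents.2 ⟨fun i => (hba i).trans_lt (ha i), hbm⟩
    Submodule.mem_map_of_mem
      (Submodule.subset_span (Set.mem_range_self (⟨b, hb⟩ : reducedExponents ι q m)))
  have hexpand : Matrix.of (fun s t : S => monomialFun a ((s : ι → F) + (t : ι → F))) =
      ∑ b ∈ Fintype.piFinset fun i => range (a i + 1), (∏ i, ((a i).choose (b i) : F)) •
        Matrix.of fun s t : S => monomialFun b (s : ι → F) * monomialFun (a - b) (t : ι → F) := by
    ext s t
    simp [monomialFun_add, Matrix.sum_apply, mul_assoc]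
  rw [hexpand]
  refine Submodule.sum_mem _ fun b hb => Submodule.smul_mem _ _ ?_
  simp only [Fintype.mem_piFinset, mem_range, Nat.lt_succ_iff] at hb
  have hsplit : ∑ i, b i + ∑ i, (a - b) i = ∑ i, a i := by
    rw [← sum_add_distrib]
    exact sum_congr rfl fun i _ => Nat.add_sub_cancel' (hb i)
  by_cases hbm : ∑ i, b i ≤ m
  · exact Matrix.of_mul_mem_rowsAddColsIn_of_mem_left _ (hmono b hb hbm) _
  · exact Matrix.of_mul_mem_rowsAddColsIn_of_mem_right _ _
      (hmono (a - b) (fun i => Nat.sub_le _ _) (by omega))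

theorem rank_of_apply_add_le (S : Finset (ι → F)) {q d m : ℕ} (hdm : d ≤ 2 * m + 1)
    {P : (ι → F) → F} (hP : P ∈ reducedPolyFuns ι F q d) :
    (Matrix.of fun s t : S => P (s + t)).rank ≤ 2 * #(reducedExponents ι q m) := by
  set U := (reducedPolyFuns ι F q m).map (LinearMap.funLeft F F ((↑) : S → ι → F))
  have hU : finrank F U ≤ #(reducedExponents ι q m) :=
    (Submodule.finrank_map_le _ _).trans
      ((finrank_range_le_card _).trans (Fintype.card_coe _).le)
  suffices hmem : Matrix.of (fun s t : S => P (s + t)) ∈ Matrix.rowsAddColsIn U U by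
    have := Matrix.rank_le_of_mem_rowsAddColsIn hmem
    omega
  induction hP using Submodule.span_induction with
  | mem _ h =>
    obtain ⟨⟨a, ha⟩, rfl⟩ := h
    obtain ⟨ha, hdeg⟩ := mem_reducedExponents.1 ha
    exact of_monomialFun_add_mem_rowsAddColsIn S ha (hdeg.trans hdm)
  | zero => exact Submodule.zero_mem _
  | add P Q _ _ hP hQ => exact Submodule.add_mem _ hP hQ
  | smul c P _ hP => exact Submodule.smul_mem _ c hP

end CrootLevPach

section CapSet

variable {ι F : Type u} [Fintype ι] [DecidableEq ι] [Field F] [Fintype F] [DecidableEq F]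

theorem card_add_card_reducedExponents_le {S : Finset (ι → F)}
    (hS : ThreeAPFree (S : Set (ι → F))) {d m : ℕ} (hdm : d ≤ 2 * m + 1) :
    #S + #(reducedExponents ι (Fintype.card F) d) ≤
      Fintype.card F ^ Fintype.card ι + 2 * #(reducedExponents ι (Fintype.card F) m) := by
  set D := S.image fun s => s + s
  -- `s + s = t + t` makes `(s, t, s)` a progression
  have hD : #D = #S := card_image_of_injOn fun s hs t ht hst => hS hs ht hs hst
  obtain ⟨P, hPV, hPD, hsupp⟩ :=
    (reducedPolyFuns ι F (Fintype.card F) d).exists_mem_support_subset_finrank_le D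
  have hdiag : Matrix.of (fun s t : S => P (s + t)) = Matrix.diagonal fun s : S => P (s + s) := by
    ext s t
    by_cases hst : s = t
    · simp [hst]
    rw [Matrix.of_apply, Matrix.diagonal_apply_ne _ hst]
    refine hPD _ fun hmem => hst ?_
    obtain ⟨u, hu, hus⟩ := mem_image.1 hmem
    exact Subtype.ext ((hS s.2 hu t.2 hus.symm).trans (hS.eq_right s.2 hu t.2 hus.symm))
  have hrank := rank_of_apply_add_le S hdm hPV
  rw [hdiag, Matrix.rank_diagonal] at hrank
  have hdouble : #{x | P x ≠ 0} ≤ Fintype.card {s : S // P (s + s) ≠ 0} := by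
    rw [← Fintype.card_subtype]
    refine Fintype.card_le_of_surjective (fun s => ⟨s.1 + s.1, s.2⟩) fun ⟨x, hx⟩ => ?_
    obtain ⟨s, hs, rfl⟩ := mem_image.1 (not_imp_comm.1 (hPD x) hx)
    exact ⟨⟨⟨s, hs⟩, hx⟩, rfl⟩
  rw [finrank_reducedPolyFuns, card_compl, hD, Fintype.card_fun] at hsupp
  have hS_le : #S ≤ Fintype.card F ^ Fintype.card ι := by
    simpa [Fintype.card_fun] using card_le_univ S
  omega

theorem card_le_three_mul_card_reducedExponents {S : Finset (ι → F)}
    (hS : ThreeAPFree (S : Set (ι → F))) {t : ℕ}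
    (ht : (Fintype.card F - 1) * Fintype.card ι ≤ 3 * t + 2) :
    #S ≤ 3 * #(reducedExponents ι (Fintype.card F) t) := by
  have := card_add_card_reducedExponents_le hS (d := 2 * t + 1) (m := t) le_rfl
  have := card_pow_le_card_reducedExponents_add (ι := ι) (q := Fintype.card F) (d := 2 * t + 1)
    (k := t) (by omega)
  omega

end CapSet

open Filter Topology in
theorem HasDerivAt.exists_left_gt_of_neg {f : ℝ → ℝ} {f' a l : ℝ} (hf : HasDerivAt f f' a)
    (hf' : f' < 0) (hl : l < a) : ∃ x ∈ Set.Ioo l a, f a < f x := by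
  have hslope : ∀ᶠ x in 𝓝[<] a, slope f a x < 0 :=
    nhdsWithin_mono a (fun _ hx => ne_of_lt hx)
      (hasDerivAt_iff_tendsto_slope.1 hf (Iio_mem_nhds hf'))
  obtain ⟨x, hx, hxla⟩ := (hslope.and (Ioo_mem_nhdsLT hl)).exists
  rw [slope_def_field, div_lt_iff_of_neg (sub_neg.2 hxla.2), zero_mul, sub_pos] at hx
  exact ⟨x, hxla, hx⟩

theorem exists_sum_pow_lt_mul_rpow {q : ℕ} (hq : 1 < q) :
    ∃ x : ℝ, 0 < x ∧ x < 1 ∧ ∑ j ∈ range q, x ^ j < q * x ^ (((q : ℝ) - 1) / 3) := by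
  set e : ℝ := ((q : ℝ) - 1) / 3
  -- both sides equal `q` at `x = 1`, where the left one grows faster: `q (q - 1) / 2 > q e`
  have hφ : HasDerivAt (fun x : ℝ => q * x ^ e - ∑ j ∈ range q, x ^ j)
      (q * e - ∑ j ∈ range q, (j : ℝ)) 1 := by
    have hpow := (Real.hasDerivAt_rpow_const (x := 1) (p := e) (Or.inl one_ne_zero)).const_mul
      (q : ℝ)
    have hsum := HasDerivAt.fun_sum (u := range q) fun j _ => hasDerivAt_pow j (1 : ℝ)
    simpa using hpow.fun_sub hsum
  have hgauss : ∑ j ∈ range q, (j : ℝ) = q * (q - 1) / 2 := by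
    rw [← Nat.cast_sum, eq_div_iff two_ne_zero, ← Nat.cast_ofNat, ← Nat.cast_mul,
      sum_range_id_mul_two, Nat.cast_mul, Nat.cast_pred (by omega)]
  have hneg : q * e - ∑ j ∈ range q, (j : ℝ) < 0 := by
    have : (1 : ℝ) < q := by exact_mod_cast hq
    rw [hgauss]
    simp only [e]
    nlinarith
  obtain ⟨x, ⟨hx0, hx1⟩, hx⟩ := hφ.exists_left_gt_of_neg hneg zero_lt_one
  refine ⟨x, hx0, hx1, ?_⟩
  simp only [Real.one_rpow, one_pow, sum_const, card_range, nsmul_eq_mul, mul_one] at hx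
  linarith

theorem exists_card_reducedExponents_le_pow {q : ℕ} (hq : 1 < q) :
    ∃ B : ℝ, 1 < B ∧ B < q ∧
      ∀ n : ℕ, (#(reducedExponents (Fin n) q ((q - 1) * n / 3)) : ℝ) ≤ B ^ n := by
  obtain ⟨x, hx0, hx1, hx⟩ := exists_sum_pow_lt_mul_rpow hq
  set e : ℝ := ((q : ℝ) - 1) / 3
  set G := ∑ j ∈ range q, x ^ j
  have he : 0 ≤ e := by
    have : (1 : ℝ) ≤ q := by exact_mod_cast hq.le
    positivity
  have hxe : 0 < x ^ e := Real.rpow_pos_of_pos hx0 e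
  have hG : 1 < G := by
    have : 1 + x ≤ G := by
      simpa [sum_range_succ] using sum_le_sum_of_subset_of_nonneg (range_subset_range.2 hq)
        (fun j _ _ => pow_nonneg hx0.le j) (f := fun j => x ^ j)
    linarith
  refine ⟨G / x ^ e, (one_lt_div hxe).2 ((Real.rpow_le_one hx0.le hx1.le he).trans_lt hG),
    (div_lt_iff₀ hxe).2 hx, fun n => ?_⟩
  set t := (q - 1) * n / 3
  have ht : (t : ℝ) ≤ e * n :=
    calc (t : ℝ) ≤ (((q - 1) * n : ℕ) : ℝ) / (3 : ℕ) := Nat.cast_div_le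
      _ = e * n := by push_cast [Nat.cast_sub hq.le]; ring
  have hcount := card_reducedExponents_mul_pow_le (ι := Fin n) q t hx0.le hx1.le
  rw [Fintype.card_fin] at hcount
  calc (#(reducedExponents (Fin n) q t) : ℝ) ≤ G ^ n / x ^ t :=
        (le_div_iff₀ (by positivity)).2 hcount
    _ ≤ G ^ n / x ^ (e * n) := by
        gcongr
        rw [← Real.rpow_natCast]
        exact Real.rpow_le_rpow_of_exponent_ge hx0 hx1.le ht
    _ = (G / x ^ e) ^ n := by
        rw [div_pow, ← Real.rpow_natCast (x ^ e), ← Real.rpow_mul hx0.le]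

theorem ellenberg_gijswijt_general (p : ℕ) (hp : p.Prime) :
    ∃ c C : ℝ, 0 < c ∧ c < 1 ∧ 0 < C ∧
      ∀ n : ℕ, 1 ≤ n →
        ∀ S : Finset (Fin n → ZMod p),
          (∀ x ∈ S, ∀ y ∈ S, ∀ z ∈ S, x + z = y + y → x = y ∧ y = z) →
          (S.card : ℝ) ≤ C * (p : ℝ) ^ (c * n) := by
  have : Fact p.Prime := ⟨hp⟩
  have hp1 : (1 : ℝ) < p := by exact_mod_cast hp.one_lt
  obtain ⟨B, hB1, hBp, hcard⟩ := exists_card_reducedExponents_le_pow hp.one_lt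
  refine ⟨Real.logb p B, 3, Real.logb_pos hp1 hB1, ?_, by norm_num, fun n _ S hS => ?_⟩
  · rwa [Real.logb_lt_iff_lt_rpow hp1 (by linarith), Real.rpow_one]
  have hS3 := card_le_three_mul_card_reducedExponents (t := (p - 1) * n / 3)
    (fun x hx y hy z hz h => (hS x hx y hy z hz h).1)
    (by simp only [ZMod.card, Fintype.card_fin]; omega)
  rw [ZMod.card] at hS3
  calc (S.card : ℝ) ≤ 3 * #(reducedExponents (Fin n) p ((p - 1) * n / 3)) := by
        exact_mod_cast hS3
    _ ≤ 3 * B ^ n := by gcongr; exact hcard n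
    _ = 3 * (p : ℝ) ^ (Real.logb p B * n) := by
        rw [Real.rpow_mul (by positivity), Real.rpow_logb (by positivity) hp1.ne' (by linarith),
          Real.rpow_natCast]

/-- Ellenberg–Gijswijt: for every prime `p ≥ 3`, progression-free subsets of `𝔽_p^n`
have size at most `C_p · p^(c_p n)` for constants `0 < c_p < 1`, `C_p > 0`. -/
theorem ellenberg_gijswijt (p : ℕ) (hp : p.Prime) (hp3 : 3 ≤ p) :
    ∃ c C : ℝ, 0 < c ∧ c < 1 ∧ 0 < C ∧
      ∀ n : ℕ, 1 ≤ n →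
        ∀ S : Finset (Fin n → ZMod p),
          (∀ x ∈ S, ∀ y ∈ S, ∀ z ∈ S, x + z = y + y → x = y ∧ y = z) →
          (S.card : ℝ) ≤ C * (p : ℝ) ^ (c * n) :=
  ellenberg_gijswijt_general p hp
end

section
/- For every α > 0 there exists N_0 such that for all N > N_0, every subset S ⊆ {1, 2, ..., N} with |S| ≥ α·N contains a nontrivial three-term arithmetic progression; equivalently, the largest subset of {1,...,N} with no three-term arithmetic progression has size o(N). -/
lemma threeAPFree_of_forall_notMem {s : Set ℕ}
    (hs : ∀ x d : ℕ, d ≠ 0 → x ∈ s → x + d ∈ s → x + 2 * d ∉ s) : ThreeAPFree s := by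
  rw [threeAPFree_iff_eq_right]
  intro a ha b hb c hc habc
  by_contra hac
  rcases Nat.lt_or_gt_of_ne hac with h | h
  · exact hs a (b - a) (by omega) ha (by rwa [show a + (b - a) = b by omega])
      (by rwa [show a + 2 * (b - a) = c by omega])
  · exact hs c (b - c) (by omega) hc (by rwa [show c + (b - c) = b by omega])
      (by rwa [show c + 2 * (b - c) = a by omega])

/-- Roth's theorem: every subset of `{1,...,N}` of positive density contains a
nontrivial three-term arithmetic progression, once `N` is large enough. -/
theorem roth (α : ℝ) (hα : 0 < α) :
    ∃ N₀ : ℕ, ∀ N : ℕ, N₀ < N →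
      ∀ S : Finset ℕ, S ⊆ Finset.Icc 1 N → α * N ≤ S.card →
        ∃ x d : ℕ, d ≠ 0 ∧ x ∈ S ∧ x + d ∈ S ∧ x + 2 * d ∈ S := by
  refine ⟨cornersTheoremBound (α / 2 / 3), fun N hN S hS hcard => ?_⟩
  by_contra! hS_free
  have hS_range : S ⊆ Finset.range (N + 1) :=
    hS.trans fun x hx => Finset.mem_range.2 (by have := Finset.mem_Icc.1 hx; omega)
  -- Mathlib's version works in `range (N + 1)`; density `α / 2` there is implied by `α` in `Icc 1 N`.
  have hdensity : α / 2 * (N + 1 : ℕ) ≤ S.card := by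
    have hN1 : (1 : ℝ) ≤ N := by exact_mod_cast (show 1 ≤ N by omega)
    push_cast
    nlinarith
  exact roth_3ap_theorem_nat (α / 2) (by positivity) (by omega) S hS_range hdensity
    (threeAPFree_of_forall_notMem hS_free)
end

section
/- For every ε > 0 there exists N_0 such that for every integer N > N_0 there exists a subset S ⊆ {1, 2, ..., N} containing no three-term arithmetic progression with |S| ≥ N · exp(−(2·√(log 4) + ε)·√(log N)). -/
/-!
Points of the box `[0, d)ⁿ` on a sphere `∑ vᵢ² = k` contain no three-term progression, and
reading them as base-`(2d - 1)` digits keeps this in `ℕ`, as adding two digits never carries;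
pigeonholing over the `≤ n d²` values of `k` gives `rothNumberNat ((2d - 1)ⁿ) ≥ dⁿ / (n d²)`
(`Behrend.bound_aux'`). With `d = ⌊N^(1/n) / 2⌋` Bernoulli gives `dⁿ ≥ N / 2ⁿ⁺¹` once
`4n ≤ N^(1/n)`, so the loss against `N` is `(n - 1) log 2 + 2 log N / n + log n`. Choosing
`n ≈ √(2 log N / log 2)` makes each of the first two terms `≤ √(log 4) √(log N)`, while
`log n = o(√(log N))`.
-/

open Real Filter Finset

lemma ThreeAPFree.not_exists_add_add_two_mul {S : Finset ℕ} (hS : ThreeAPFree (S : Set ℕ)) :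
    ¬ ∃ x d : ℕ, d ≠ 0 ∧ x ∈ S ∧ x + d ∈ S ∧ x + 2 * d ∈ S := by
  rintro ⟨x, d, hd, hx, hxd, hx2d⟩
  have := hS (mem_coe.2 hx) (mem_coe.2 hxd) (mem_coe.2 hx2d) (by ring)
  omega

lemma exists_threeAPFree_subset_Icc_card_eq_rothNumberNat (N : ℕ) :
    ∃ S : Finset ℕ, S ⊆ Icc 1 N ∧
      (¬ ∃ x d : ℕ, d ≠ 0 ∧ x ∈ S ∧ x + d ∈ S ∧ x + 2 * d ∈ S) ∧ S.card = rothNumberNat N := by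
  obtain ⟨S, hS, hcard, hfree⟩ := addRothNumber_spec (Ico 1 (N + 1))
  rw [addRothNumber_Ico, Nat.add_sub_cancel] at hcard
  exact ⟨S, Ico_add_one_right_eq_Icc 1 N ▸ hS, hfree.not_exists_add_add_two_mul, hcard⟩

lemma pow_div_two_le_sub_one_pow {y : ℝ} {n : ℕ} (hn : 0 < n) (hy : 2 * n ≤ y) :
    y ^ n / 2 ≤ (y - 1) ^ n := by
  have hy2 : 2 ≤ y := le_trans (by exact_mod_cast Nat.mul_le_mul_left 2 hn) hy
  have hy0 : 0 < y := by linarith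
  have bernoulli := one_add_mul_le_pow (a := -y⁻¹) (by grw [← hy2]; norm_num) n
  have hny : n / y ≤ 1 / 2 := by rw [div_le_iff₀ hy0]; linarith
  calc y ^ n / 2 ≤ y ^ n * (1 + n * -y⁻¹) := by
        rw [mul_neg, ← div_eq_mul_inv]; nlinarith [pow_pos hy0 n]
    _ ≤ y ^ n * (1 + -y⁻¹) ^ n := by gcongr
    _ = (y - 1) ^ n := by rw [← mul_pow]; congr 1; field_simp; ring

lemma div_le_rothNumberNat {N n : ℕ} {x : ℝ} (hn : 0 < n) (hx : 4 * n ≤ x) (hxN : x ^ n = N) :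
    2 * N / (2 ^ n * x ^ 2 * n) ≤ (rothNumberNat N : ℝ) := by
  have hx4 : 4 ≤ x := le_trans (by exact_mod_cast Nat.mul_le_mul_left 4 hn) hx
  set d := ⌊x / 2⌋₊
  have hd_lower : x / 2 - 1 < d := Nat.sub_one_lt_floor _
  have hd_upper : (d : ℝ) ≤ x / 2 := Nat.floor_le (by linarith)
  have hd : (0 : ℝ) < d := by linarith
  have hdN : (2 * d - 1) ^ n ≤ N := by
    refine (Nat.pow_le_pow_left (Nat.sub_le _ _) n).trans ?_
    have : ((2 * d : ℕ) : ℝ) ^ n ≤ N := by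
      rw [← hxN]; push_cast; gcongr; linarith
    exact_mod_cast this
  calc (2 * N / (2 ^ n * x ^ 2 * n) : ℝ) = (x / 2) ^ n / 2 / (n * (x / 2) ^ 2) := by
        rw [← hxN, div_pow]; field_simp
    _ ≤ d ^ n / (n * d ^ 2) := by
        gcongr
        exact (pow_div_two_le_sub_one_pow hn (by linarith)).trans
          (pow_le_pow_left₀ (by linarith) hd_lower.le n)
    _ ≤ rothNumberNat ((2 * d - 1) ^ n) := by exact_mod_cast Behrend.bound_aux' n d
    _ ≤ rothNumberNat N := by exact_mod_cast rothNumberNat.mono hdN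

/-- The dimension `n` of the box, as a function of `t = √(log N)`. -/
noncomputable def behrendDim (t : ℝ) : ℕ := ⌈2 * t / √(log 4)⌉₊

lemma sqrt_log_four_pos : 0 < √(log 4) := sqrt_pos.2 (log_pos (by norm_num))

lemma sq_sqrt_log_four : √(log 4) ^ 2 = 2 * log 2 := by
  rw [sq_sqrt (log_nonneg (by norm_num)), show (4 : ℝ) = 2 ^ 2 by norm_num, log_pow]
  norm_num

lemma behrendDim_pos {t : ℝ} (ht : 0 < t) : 0 < behrendDim t :=
  Nat.ceil_pos.2 (div_pos (by positivity) sqrt_log_four_pos)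

lemma le_behrendDim (t : ℝ) : 2 * t / √(log 4) ≤ behrendDim t := Nat.le_ceil _

lemma behrendDim_lt {t : ℝ} (ht : 0 ≤ t) : (behrendDim t : ℝ) < 2 * t / √(log 4) + 1 :=
  Nat.ceil_lt_add_one (div_nonneg (by positivity) sqrt_log_four_pos.le)

lemma behrendDim_cost_le {t : ℝ} (ht : 0 < t) :
    (behrendDim t - 1) * log 2 + 2 * t ^ 2 / behrendDim t ≤ 2 * √(log 4) * t := by
  set a := √(log 4)
  have ha : 0 < a := sqrt_log_four_pos
  have hlog2 : log 2 = a ^ 2 / 2 := by rw [sq_sqrt_log_four]; ring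
  have hfirst : (behrendDim t - 1) * log 2 ≤ a * t := by
    calc (behrendDim t - 1) * log 2 ≤ 2 * t / a * (a ^ 2 / 2) := by
          rw [hlog2]; gcongr; linarith [behrendDim_lt ht.le]
      _ = a * t := by field_simp
  have hsecond : 2 * t ^ 2 / behrendDim t ≤ a * t := by
    calc 2 * t ^ 2 / behrendDim t ≤ 2 * t ^ 2 / (2 * t / a) := by
          gcongr; exact le_behrendDim t
      _ = a * t := by field_simp
  linarith

lemma eventually_mul_le_exp_mul {b C : ℝ} (hb : 0 < b) (hC : 0 < C) :
    ∀ᶠ t in atTop, C * t ≤ exp (b * t) := by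
  filter_upwards [(isLittleO_pow_exp_pos_mul_atTop 1 hb).bound (inv_pos.2 hC)] with t ht
  rw [pow_one, norm_eq_abs, norm_of_nonneg (exp_pos _).le] at ht
  calc C * t ≤ C * |t| := by gcongr; exact le_abs_self t
    _ ≤ exp (b * t) := by rwa [← le_div_iff₀' hC, div_eq_inv_mul]

lemma eventually_behrendDim {ε : ℝ} (hε : 0 < ε) :
    ∀ᶠ t in atTop, 0 < t ∧ 4 * behrendDim t ≤ exp (t ^ 2 / behrendDim t) ∧
      log (behrendDim t) ≤ ε * t := by
  set a := √(log 4)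
  have ha : 0 < a := sqrt_log_four_pos
  filter_upwards [eventually_ge_atTop a, eventually_mul_le_exp_mul (by positivity : 0 < a / 3)
    (by positivity : 0 < 12 / a), eventually_mul_le_exp_mul hε (by positivity : 0 < 3 / a)]
    with t hta hexp_dim hexp_log
  have ht : 0 < t := ha.trans_le hta
  have hn : (0 : ℝ) < behrendDim t := by exact_mod_cast behrendDim_pos ht
  have hn_le : (behrendDim t : ℝ) ≤ 3 / a * t := by
    have hta' : 1 ≤ t / a := by rwa [le_div_iff₀ ha, one_mul]
    calc (behrendDim t : ℝ) ≤ 2 * t / a + t / a := by linarith [behrendDim_lt ht.le]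
      _ = 3 / a * t := by ring
  refine ⟨ht, ?_, ?_⟩
  · calc 4 * (behrendDim t : ℝ) ≤ 4 * (3 / a * t) := by gcongr
      _ = 12 / a * t := by ring
      _ ≤ exp (a / 3 * t) := hexp_dim
      _ ≤ exp (t ^ 2 / behrendDim t) := by
        rw [exp_le_exp, le_div_iff₀ hn]
        calc a / 3 * t * behrendDim t ≤ a / 3 * t * (3 / a * t) := by gcongr
          _ = t ^ 2 := by field_simp
  · rw [log_le_iff_le_exp hn]
    linarith

lemma mul_exp_le_rothNumberNat {N : ℕ} {t ε : ℝ} (ht : 0 < t) (hN : (N : ℝ) = exp (t ^ 2))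
    (hx : 4 * behrendDim t ≤ exp (t ^ 2 / behrendDim t)) (hlog : log (behrendDim t) ≤ ε * t) :
    N * exp (-(2 * √(log 4) + ε) * t) ≤ rothNumberNat N := by
  set n := behrendDim t
  set x := exp (t ^ 2 / n)
  have hn : 0 < n := behrendDim_pos ht
  have hn' : (0 : ℝ) < n := by exact_mod_cast hn
  have hxN : x ^ n = N := by rw [hN, ← exp_nat_mul]; congr 1; field_simp
  have hcost : 2 ^ n * x ^ 2 * n / 2 ≤ exp ((2 * √(log 4) + ε) * t) := by
    calc 2 ^ n * x ^ 2 * n / 2 = exp ((n - 1) * log 2 + 2 * t ^ 2 / n + log n) := by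
          have hpow : exp ((n - 1) * log 2) = 2 ^ n / 2 := by
            rw [sub_mul, exp_sub, one_mul, exp_nat_mul, exp_log two_pos]
          have hsq : exp (2 * t ^ 2 / n) = x ^ 2 := by
            rw [sq x, ← exp_add]; congr 1; ring
          rw [exp_add, exp_add, hpow, hsq, exp_log hn']
          ring
      _ ≤ exp ((2 * √(log 4) + ε) * t) := by
          rw [exp_le_exp]; linarith [behrendDim_cost_le ht]
  refine le_trans ?_ (div_le_rothNumberNat hn hx hxN)
  rw [neg_mul, exp_neg, ← div_eq_mul_inv, div_le_div_iff₀ (exp_pos _) (by positivity)]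
  nlinarith [Nat.cast_nonneg (α := ℝ) N]

/-- Behrend's construction: for every `ε > 0` and all large `N` there is a
progression-free subset of `{1,...,N}` of size at least
`N · exp(−(2√(log 4) + ε)·√(log N))`. -/
theorem behrend (ε : ℝ) (hε : 0 < ε) :
    ∃ N₀ : ℕ, ∀ N : ℕ, N₀ < N →
      ∃ S : Finset ℕ, S ⊆ Finset.Icc 1 N ∧
        (¬ ∃ x d : ℕ, d ≠ 0 ∧ x ∈ S ∧ x + d ∈ S ∧ x + 2 * d ∈ S) ∧
        (N : ℝ) * Real.exp (-(2 * Real.sqrt (Real.log 4) + ε) * Real.sqrt (Real.log N))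
          ≤ S.card := by
  have hlarge : Tendsto (fun N : ℕ => √(log N)) atTop atTop :=
    tendsto_sqrt_atTop.comp (tendsto_log_atTop.comp tendsto_natCast_atTop_atTop)
  obtain ⟨N₀, hN₀⟩ := eventually_atTop.1 (hlarge.eventually (eventually_behrendDim hε))
  refine ⟨N₀, fun N hN => ?_⟩
  obtain ⟨ht, hx, hlog⟩ := hN₀ N hN.le
  obtain ⟨S, hS, hfree, hcard⟩ := exists_threeAPFree_subset_Icc_card_eq_rothNumberNat N
  have hlogN : 0 < log N := sqrt_pos.1 ht
  have hN : (N : ℝ) = exp (√(log N) ^ 2) := by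
    rw [sq_sqrt hlogN.le, exp_log (zero_lt_one.trans ((log_pos_iff N.cast_nonneg).1 hlogN))]
  exact ⟨S, hS, hfree, hcard ▸ mul_exp_le_rothNumberNat ht hN hx hlog⟩
end

section
/- Let S ⊆ 𝔽_3^n be a set containing no three-term arithmetic progression, and define f : 𝔽_3^n × 𝔽_3^n × 𝔽_3^n → 𝔽_3 by f(x, y, z) = ∏_{i=1}^n (1 − (x_i + y_i + z_i)^2). Then for all x, y, z ∈ S, f(x, y, z) = 1 if x = y = z and f(x, y, z) = 0 otherwise; that is, f restricted to S × S × S is the diagonal map. -/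
/-!
By Fermat, `1 - t ^ 2` on `𝔽_3` is the indicator of `t = 0`, so the product is the indicator of
`x + y + z = 0`. In characteristic `3` this says `x + z = 2 y`, which for `x, y, z ∈ S` forces
`x = y = z`; conversely `x = y = z` gives `x + y + z = 3 x = 0`.
-/

theorem ZMod.one_sub_pow_card_sub_one {p : ℕ} [Fact p.Prime] (t : ZMod p) :
    1 - t ^ (p - 1) = if t = 0 then 1 else 0 := by
  split_ifs with ht
  · rw [ht, zero_pow (Nat.sub_ne_zero_of_lt (Fact.out : p.Prime).one_lt), sub_zero]
  · rw [ZMod.pow_card_sub_one_eq_one ht, sub_self]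

theorem add_add_eq_zero_iff_add_eq_add_self {G : Type*} [AddCommGroup G] [Module (ZMod 3) G]
    {x y z : G} : x + y + z = 0 ↔ x + z = y + y := by
  have neg_eq_add_self : -y = y + y := by
    rw [neg_eq_iff_add_eq_zero]
    calc y + (y + y) = (3 : ZMod 3) • y := by module
      _ = 0 := by rw [show (3 : ZMod 3) = 0 from rfl, zero_smul]
  rw [add_right_comm, add_eq_zero_iff_eq_neg, neg_eq_add_self]

/-- If `S ⊆ 𝔽_3^n` is progression-free, then the function
`f(x,y,z) = ∏ i, (1 − (xᵢ + yᵢ + zᵢ)²)` restricted to `S × S × S` is the diagonal map: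
it is `1` when `x = y = z` and `0` otherwise. -/
theorem capset_polynomial_is_diagonal {n : ℕ} (S : Set (Fin n → ZMod 3))
    (hS : ∀ x ∈ S, ∀ y ∈ S, ∀ z ∈ S, x + z = y + y → x = y ∧ y = z) :
    ∀ x ∈ S, ∀ y ∈ S, ∀ z ∈ S,
      (∏ i : Fin n, (1 - (x i + y i + z i) ^ 2)) =
        if x = y ∧ y = z then (1 : ZMod 3) else 0 := by
  intro x hx y hy z hz
  have sum_eq_zero_iff : (∀ i, x i + y i + z i = 0) ↔ x = y ∧ y = z :=
    calc (∀ i, x i + y i + z i = 0) ↔ x + y + z = 0 := funext_iff.symm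
      _ ↔ x + z = y + y := add_add_eq_zero_iff_add_eq_add_self
      _ ↔ x = y ∧ y = z := ⟨hS x hx y hy z hz, by rintro ⟨rfl, rfl⟩; rfl⟩
  calc ∏ i, (1 - (x i + y i + z i) ^ 2)
      = ∏ i, if x i + y i + z i = 0 then 1 else 0 :=
        Finset.prod_congr rfl fun i _ => ZMod.one_sub_pow_card_sub_one (p := 3) _
    _ = if x = y ∧ y = z then 1 else 0 := by
        simp only [Finset.prod_boole, Finset.mem_univ, true_implies, sum_eq_zero_iff]
end
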